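/- arXiv:2412.18338 — 2 statements merged into one kernel-verified Lean document; each statement's English description precedes it below -/
import Mathlib

section
/- For every continuously differentiable function x : [0,1] → ℝ with x(0) = x(1) = 0 one has the Poincaré inequality with constant 1/√2 on the unit interval: (∫₀¹ x(z)² dz)^{1/2} ≤ (1/√2) · (∫₀¹ x'(z)² dz)^{1/2}. -/
/-!
Since `x 0 = 0`, the fundamental theorem of calculus and Cauchy–Schwarz give
`x z ^ 2 ≤ z * ∫₀¹ x'²` for `z ∈ [0, 1]`; integrating this pointwise bound over `[0, 1]`
produces the factor `∫₀¹ z dz = 1/2`. Cauchy–Schwarz is obtained from the nonnegativity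
of the quadratic `t ↦ ∫ (f - t)²`, whose discriminant must therefore be nonpositive.
-/

open MeasureTheory Set

theorem sq_integral_le_measureReal_univ_mul_integral_sq {α : Type*} [MeasurableSpace α]
    {μ : Measure α} [IsFiniteMeasure μ] {f : α → ℝ} (hf : MemLp f 2 μ) :
    (∫ a, f a ∂μ) ^ 2 ≤ μ.real univ * ∫ a, f a ^ 2 ∂μ := by
  have hf1 : Integrable f μ := hf.integrable one_le_two
  have hf2 : Integrable (fun a => f a ^ 2) μ := hf.integrable_sq
  have hquad : ∀ t : ℝ,
      0 ≤ μ.real univ * (t * t) + (-2 * ∫ a, f a ∂μ) * t + ∫ a, f a ^ 2 ∂μ := by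
    intro t
    have hexp : ∫ a, (f a - t) ^ 2 ∂μ
        = μ.real univ * (t * t) + (-2 * ∫ a, f a ∂μ) * t + ∫ a, f a ^ 2 ∂μ := by
      have : (fun a => (f a - t) ^ 2) = fun a => (f a ^ 2 - f a * (2 * t)) + t ^ 2 := by
        ext; ring
      rw [this, integral_add ?_ (integrable_const _), integral_sub hf2 (hf1.mul_const _),
        integral_mul_const, integral_const, smul_eq_mul]
      · ring
      · exact hf2.sub (hf1.mul_const _)
    exact hexp ▸ integral_nonneg fun a => sq_nonneg _
  have hdiscr := discrim_le_zero hquad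
  rw [discrim] at hdiscr
  linarith

theorem sq_le_mul_integral_deriv_sq {x : ℝ → ℝ} (hx : ContDiff ℝ 1 x) {a z : ℝ}
    (hxa : x a = 0) (haz : a ≤ z) :
    x z ^ 2 ≤ (z - a) * ∫ t in a..z, deriv x t ^ 2 := by
  have hx' : Continuous (deriv x) := hx.continuous_deriv le_rfl
  have hftc : x z = ∫ t in a..z, deriv x t := by
    rw [intervalIntegral.integral_deriv_eq_sub (fun t _ => (hx.differentiable one_ne_zero) t)
      (hx'.intervalIntegrable a z), hxa, sub_zero]
  have hL2 : MemLp (deriv x) 2 (volume.restrict (Ioc a z)) :=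
    (memLp_two_iff_integrable_sq hx'.aestronglyMeasurable).2 (hx'.pow 2).integrableOn_Ioc
  rw [hftc, intervalIntegral.integral_of_le haz, intervalIntegral.integral_of_le haz]
  simpa [haz] using sq_integral_le_measureReal_univ_mul_integral_sq hL2

theorem integral_sq_le_mul_integral_deriv_sq {x : ℝ → ℝ} (hx : ContDiff ℝ 1 x) {a b : ℝ}
    (hxa : x a = 0) (hab : a ≤ b) :
    ∫ z in a..b, x z ^ 2 ≤ (b - a) ^ 2 / 2 * ∫ t in a..b, deriv x t ^ 2 := by
  set D := ∫ t in a..b, deriv x t ^ 2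
  have hx' : Continuous (deriv x) := hx.continuous_deriv le_rfl
  have hpointwise : ∀ z ∈ Icc a b, x z ^ 2 ≤ (z - a) * D := fun z hz =>
    (sq_le_mul_integral_deriv_sq hx hxa hz.1).trans <| mul_le_mul_of_nonneg_left
      (intervalIntegral.integral_mono_interval le_rfl hz.1 hz.2
        (Filter.Eventually.of_forall fun t => sq_nonneg _) ((hx'.pow 2).intervalIntegrable a b))
      (sub_nonneg.2 hz.1)
  calc ∫ z in a..b, x z ^ 2 ≤ ∫ z in a..b, (z - a) * D :=
        intervalIntegral.integral_mono_on hab ((hx.continuous.pow 2).intervalIntegrable a b)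
          ((by fun_prop : Continuous fun z => (z - a) * D).intervalIntegrable a b) hpointwise
    _ = (b - a) ^ 2 / 2 * D := by
        rw [intervalIntegral.integral_mul_const,
          intervalIntegral.integral_comp_sub_right fun z => z, integral_id]
        ring

theorem stmt_0_general (x : ℝ → ℝ) (hx : ContDiff ℝ 1 x) (h0 : x 0 = 0) :
    Real.sqrt (∫ z in (0:ℝ)..1, (x z) ^ 2) ≤
      (1 / Real.sqrt 2) * Real.sqrt (∫ z in (0:ℝ)..1, (deriv x z) ^ 2) := by
  have hsq := integral_sq_le_mul_integral_deriv_sq hx h0 zero_le_one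
  norm_num at hsq
  calc Real.sqrt (∫ z in (0:ℝ)..1, x z ^ 2)
      ≤ Real.sqrt ((∫ z in (0:ℝ)..1, deriv x z ^ 2) / 2) := Real.sqrt_le_sqrt (by linarith)
    _ = 1 / Real.sqrt 2 * Real.sqrt (∫ z in (0:ℝ)..1, deriv x z ^ 2) := by
        rw [Real.sqrt_div' _ zero_le_two]
        ring

/-- **Poincaré inequality on (0,1) with constant 1/√2.**
For every continuously differentiable `x : [0,1] → ℝ` with `x 0 = x 1 = 0` one has
`‖x‖_{L²(0,1)} ≤ (1/√2)·‖x'‖_{L²(0,1)}`. -/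
theorem stmt_0 (x : ℝ → ℝ) (hx : ContDiff ℝ 1 x) (h0 : x 0 = 0) (h1 : x 1 = 0) :
    Real.sqrt (∫ z in (0:ℝ)..1, (x z) ^ 2) ≤
      (1 / Real.sqrt 2) * Real.sqrt (∫ z in (0:ℝ)..1, (deriv x z) ^ 2) :=
  stmt_0_general x hx h0
end

section
/- Let α ∈ [0, 1/2]. For every x in the linear span of {h_k : k ≥ 1}, that is, every finite linear combination x = Σ_{k=1}^{n} a_k h_k with real coefficients, one has ‖(-A)^{−α} ( ((-A)^{α − 1/2} x)' )‖_{L²} ≤ ‖x‖_{L²}, where ((-A)^{α−1/2} x)' = Σ_{k=1}^{n} (πk)^{2α} a_k · √2·cos(kπ·) denotes the classical derivative of the trigonometric polynomial (-A)^{α−1/2} x = Σ_{k=1}^{n} (πk)^{2α−1} a_k h_k. (Equivalently: the densely defined operator (-A)^{−α} ∇ (-A)^{−1/2+α} has operator norm at most 1 on L²(0,1).) -/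
open Real MeasureTheory

/-- `h_{k+1}(z) = √2·sin((k+1)πz)`, the eigenfunctions of the Dirichlet Laplacian on `(0,1)`. -/
noncomputable def eigfun (k : ℕ) (z : ℝ) : ℝ := Real.sqrt 2 * Real.sin ((k + 1 : ℝ) * π * z)

/-- `g_{k+1}(z) = √2·cos((k+1)πz)`. -/
noncomputable def cosfun (k : ℕ) (z : ℝ) : ℝ := Real.sqrt 2 * Real.cos ((k + 1 : ℝ) * π * z)

/-!
In the sine basis the operator `(-A)^{-α} ∇ (-A)^{α-1/2}` has the matrix
`ω_j^{-2α} C_{jk} ω_k^{2α}`, where `ω_k = π(k+1)` (`freq k`) and `C_{jk} = ⟨g_{k+1}, h_{j+1}⟩`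
(`cosSinCoeff j k`). For `α = 0` this is a contraction of `ℓ²` by Bessel's inequality, the
cosines `g_k` being orthonormal as well. For `α = 1/2`, integration by parts gives
`ω_k C_{jk} = -ω_j C_{kj}`, so the matrix is minus the transpose of `C`, again a contraction.
Complex interpolation between the two endpoints, via Hadamard's three lines theorem, covers every
`α ∈ [0, 1/2]`.
-/

section L2

variable {X ι : Type*} [MeasurableSpace X] {μ : Measure X}

lemma integral_mul_eq_inner_toLp {f g : X → ℝ} (hf : MemLp f 2 μ) (hg : MemLp g 2 μ) :
    ∫ x, f x * g x ∂μ = inner ℝ (hf.toLp f) (hg.toLp g) := by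
  rw [L2.inner_def]
  refine integral_congr_ae ?_
  filter_upwards [hf.coeFn_toLp, hg.coeFn_toLp] with x hfx hgx
  rw [hfx, hgx, real_inner_eq_re_inner, RCLike.inner_apply]
  simp [mul_comm]

lemma integral_sum_mul_mul {f : ι → X → ℝ} (hf : ∀ i, MemLp (f i) 2 μ) {g : X → ℝ}
    (hg : MemLp g 2 μ) (a : ι → ℝ) (s : Finset ι) :
    ∫ x, (∑ i ∈ s, a i * f i x) * g x ∂μ = ∑ i ∈ s, a i * ∫ x, f i x * g x ∂μ := by
  simp_rw [Finset.sum_mul, mul_assoc]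
  rw [integral_finsetSum (f := fun i x => a i * (f i x * g x)) _
    fun i _ => ((hf i).integrable_mul hg).const_mul (a i)]
  simp_rw [integral_const_mul]

variable [DecidableEq ι] {e : ι → X → ℝ}

lemma sum_sq_integral_mul_le_integral_sq (he : ∀ i, MemLp (e i) 2 μ)
    (horth : ∀ i j, ∫ x, e i x * e j x ∂μ = if i = j then 1 else 0)
    {w : X → ℝ} (hw : MemLp w 2 μ) (t : Finset ι) :
    ∑ j ∈ t, (∫ x, w x * e j x ∂μ) ^ 2 ≤ ∫ x, w x ^ 2 ∂μ := by
  have hon : Orthonormal ℝ fun i => (he i).toLp (e i) := by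
    rw [orthonormal_iff_ite]
    intro i j
    rw [← integral_mul_eq_inner_toLp, horth]
  have bessel := hon.sum_inner_products_le (x := hw.toLp w) (s := t)
  simp only [Real.norm_eq_abs, sq_abs, ← real_inner_self_eq_norm_sq, real_inner_comm (hw.toLp w),
    ← integral_mul_eq_inner_toLp] at bessel
  simpa only [sq] using bessel

lemma integral_sq_sum_eq_sum_sq (he : ∀ i, MemLp (e i) 2 μ)
    (horth : ∀ i j, ∫ x, e i x * e j x ∂μ = if i = j then 1 else 0) (a : ι → ℝ) (s : Finset ι) :
    ∫ x, (∑ i ∈ s, a i * e i x) ^ 2 ∂μ = ∑ i ∈ s, a i ^ 2 := by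
  have hint : ∀ i j, Integrable (fun x => a i * a j * (e i x * e j x)) μ :=
    fun i j => ((he i).integrable_mul (he j)).const_mul _
  have hexp : ∀ x, (∑ i ∈ s, a i * e i x) ^ 2 = ∑ i ∈ s, ∑ j ∈ s, a i * a j * (e i x * e j x) :=
    fun x => by rw [sq, Finset.sum_mul_sum]; simp only [mul_mul_mul_comm]
  simp_rw [hexp]
  rw [integral_finsetSum _ fun i _ => integrable_finsetSum _ fun j _ => hint i j]
  simp_rw [integral_finsetSum _ fun j _ => hint _ j, integral_const_mul, horth]
  simp [sq]

end L2

lemma integral_Ioo_cos_int_mul_pi (m : ℤ) :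
    ∫ z in Set.Ioo (0:ℝ) 1, cos (m * π * z) = if m = 0 then 1 else 0 := by
  rw [integral_Ioc_eq_integral_Ioo.symm, ← intervalIntegral.integral_of_le zero_le_one]
  split_ifs with hm
  · simp [hm]
  · have hmπ : (m : ℝ) * π ≠ 0 := mul_ne_zero (by exact_mod_cast hm) pi_ne_zero
    simp [intervalIntegral.integral_comp_mul_left (fun z => cos z) hmπ, Real.sin_int_mul_pi]

/-- Both `h_j h_k` and `g_j g_k` are of this form, with `c = -1` and `c = 1` respectively. -/
lemma integral_cos_sub_add_const_mul_cos (j k : ℕ) (c : ℝ) :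
    ∫ z in Set.Ioo (0:ℝ) 1,
      (cos (((j : ℤ) - k : ℤ) * π * z) + c * cos (((j : ℤ) + k + 2 : ℤ) * π * z))
      = if j = k then 1 else 0 := by
  have hint : ∀ m : ℤ, IntegrableOn (fun z => cos (m * π * z)) (Set.Ioo (0:ℝ) 1) :=
    fun m => (Continuous.integrableOn_Icc (by fun_prop)).mono_set Set.Ioo_subset_Icc_self
  rw [integral_add (hint _) ((hint _).const_mul c), integral_const_mul,
    integral_Ioo_cos_int_mul_pi, integral_Ioo_cos_int_mul_pi,
    if_neg (by positivity : ((j : ℤ) + k + 2) ≠ 0)]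
  simp [sub_eq_zero]

lemma integral_eigfun_mul_eigfun (j k : ℕ) :
    ∫ z in Set.Ioo (0:ℝ) 1, eigfun j z * eigfun k z = if j = k then 1 else 0 := by
  rw [← integral_cos_sub_add_const_mul_cos j k (-1)]
  congr 1 with z
  rw [eigfun, eigfun, mul_mul_mul_comm, Real.mul_self_sqrt zero_le_two, ← mul_assoc,
    two_mul_sin_mul_sin]
  push_cast; ring_nf

lemma integral_cosfun_mul_cosfun (j k : ℕ) :
    ∫ z in Set.Ioo (0:ℝ) 1, cosfun j z * cosfun k z = if j = k then 1 else 0 := by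
  rw [← integral_cos_sub_add_const_mul_cos j k 1]
  congr 1 with z
  rw [cosfun, cosfun, mul_mul_mul_comm, Real.mul_self_sqrt zero_le_two, ← mul_assoc,
    two_mul_cos_mul_cos]
  push_cast; ring_nf

lemma memLp_sqrt_two_mul {f : ℝ → ℝ} (hf : Continuous f) (hbound : ∀ z, |f z| ≤ 1) :
    MemLp (fun z => √2 * f z) 2 (volume.restrict (Set.Ioo (0:ℝ) 1)) :=
  MemLp.of_bound (by fun_prop) √2 (ae_of_all _ fun z => by
    rw [norm_mul, Real.norm_eq_abs, abs_of_nonneg (Real.sqrt_nonneg 2), Real.norm_eq_abs]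
    exact mul_le_of_le_one_right (Real.sqrt_nonneg 2) (hbound z))

lemma memLp_eigfun (k : ℕ) : MemLp (eigfun k) 2 (volume.restrict (Set.Ioo (0:ℝ) 1)) :=
  memLp_sqrt_two_mul (by fun_prop) fun _ => abs_sin_le_one _

lemma memLp_cosfun (k : ℕ) : MemLp (cosfun k) 2 (volume.restrict (Set.Ioo (0:ℝ) 1)) :=
  memLp_sqrt_two_mul (by fun_prop) fun _ => abs_cos_le_one _

lemma Complex.norm_ofReal_cpow_le_max {x : ℝ} (hx : 0 < x) {z : ℂ} (hz : z.re ∈ Set.Icc (-1) 1) :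
    ‖(x : ℂ) ^ z‖ ≤ max x x⁻¹ := by
  rw [Complex.norm_cpow_eq_rpow_re_of_pos hx]
  rcases le_total x 1 with hx1 | hx1
  · exact le_max_of_le_right <| (Real.rpow_le_rpow_of_exponent_ge hx hx1 hz.1).trans_eq
      (Real.rpow_neg_one x)
  · exact le_max_of_le_left <| (Real.rpow_le_rpow_of_exponent_le hx1 hz.2).trans_eq
      (Real.rpow_one x)

lemma Complex.norm_ofReal_cpow_of_re_eq_zero {x : ℝ} (hx : 0 < x) {z : ℂ} (hz : z.re = 0) :
    ‖(x : ℂ) ^ z‖ = 1 := by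
  rw [Complex.norm_cpow_eq_rpow_re_of_pos hx, hz, Real.rpow_zero]

def IsL2Contraction {ι κ : Type*} (t : Finset ι) (s : Finset κ) (K : ι → κ → ℝ) : Prop :=
  ∀ a : κ → ℝ, ∑ j ∈ t, (∑ k ∈ s, K j k * a k) ^ 2 ≤ ∑ k ∈ s, a k ^ 2

namespace IsL2Contraction

variable {ι κ : Type*} {t : Finset ι} {s : Finset κ} {K : ι → κ → ℝ}

lemma of_abs_sum_mul_le
    (h : ∀ (v : ι → ℝ) (a : κ → ℝ), |∑ j ∈ t, ∑ k ∈ s, v j * K j k * a k|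
      ≤ √(∑ j ∈ t, v j ^ 2) * √(∑ k ∈ s, a k ^ 2)) :
    IsL2Contraction t s K := by
  intro a
  set X := ∑ j ∈ t, (∑ k ∈ s, K j k * a k) ^ 2
  have hX : X ≤ √X * √(∑ k ∈ s, a k ^ 2) := by
    refine le_trans (le_of_eq ?_) ((le_abs_self _).trans (h (fun j => ∑ k ∈ s, K j k * a k) a))
    simp only [X, sq, Finset.mul_sum, mul_assoc]
  have hX0 : 0 ≤ X := Finset.sum_nonneg fun _ _ => sq_nonneg _
  have hA0 : 0 ≤ ∑ k ∈ s, a k ^ 2 := Finset.sum_nonneg fun _ _ => sq_nonneg _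
  nlinarith [Real.sq_sqrt hX0, Real.sq_sqrt hA0, Real.sqrt_nonneg X,
    Real.sqrt_nonneg (∑ k ∈ s, a k ^ 2)]

/-- The bound extends from real to complex vectors by splitting into real and imaginary parts. -/
lemma sum_norm_sq_le (h : IsL2Contraction t s K) (a : κ → ℂ) :
    ∑ j ∈ t, ‖∑ k ∈ s, (K j k : ℂ) * a k‖ ^ 2 ≤ ∑ k ∈ s, ‖a k‖ ^ 2 := by
  have hsplit : ∀ b : ℂ, ‖b‖ ^ 2 = b.re ^ 2 + b.im ^ 2 := fun b => by
    rw [Complex.sq_norm, Complex.normSq_apply]; ring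
  simp only [hsplit, Finset.sum_add_distrib, Complex.re_sum, Complex.im_sum,
    Complex.re_ofReal_mul, Complex.im_ofReal_mul]
  exact add_le_add (h _) (h _)

lemma norm_sum_mul_le (h : IsL2Contraction t s K) (v : ι → ℂ) (a : κ → ℂ) :
    ‖∑ j ∈ t, ∑ k ∈ s, v j * K j k * a k‖
      ≤ √(∑ j ∈ t, ‖v j‖ ^ 2) * √(∑ k ∈ s, ‖a k‖ ^ 2) :=
  calc ‖∑ j ∈ t, ∑ k ∈ s, v j * K j k * a k‖
      = ‖∑ j ∈ t, v j * ∑ k ∈ s, (K j k : ℂ) * a k‖ := by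
        simp only [Finset.mul_sum, mul_assoc]
    _ ≤ ∑ j ∈ t, ‖v j‖ * ‖∑ k ∈ s, (K j k : ℂ) * a k‖ :=
        (norm_sum_le _ _).trans_eq (by simp only [norm_mul])
    _ ≤ √(∑ j ∈ t, ‖v j‖ ^ 2) * √(∑ j ∈ t, ‖∑ k ∈ s, (K j k : ℂ) * a k‖ ^ 2) :=
        Real.sum_mul_le_sqrt_mul_sqrt _ _ _
    _ ≤ √(∑ j ∈ t, ‖v j‖ ^ 2) * √(∑ k ∈ s, ‖a k‖ ^ 2) := by
        gcongr; exact h.sum_norm_sq_le a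

lemma abs_sum_mul_le (h : IsL2Contraction t s K) (v : ι → ℝ) (a : κ → ℝ) :
    |∑ j ∈ t, ∑ k ∈ s, v j * K j k * a k| ≤ √(∑ j ∈ t, v j ^ 2) * √(∑ k ∈ s, a k ^ 2) := by
  simpa [← Complex.ofReal_mul, ← Complex.ofReal_sum, Complex.norm_real] using
    h.norm_sum_mul_le (fun j => v j) (fun k => a k)

lemma transpose (h : IsL2Contraction t s K) : IsL2Contraction s t fun k j => K j k :=
  of_abs_sum_mul_le fun a v => by
    rw [Finset.sum_comm, mul_comm]
    simpa only [mul_comm, mul_left_comm] using h.abs_sum_mul_le v a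

end IsL2Contraction

section TwistedBilin

open Complex HadamardThreeLines

variable {ι κ : Type*} (t : Finset ι) (s : Finset κ) (K : ι → κ → ℝ) {r : ι → ℝ} {c : κ → ℝ}
  (v : ι → ℝ) (a : κ → ℝ)

noncomputable def twistedBilin (r : ι → ℝ) (c : κ → ℝ) (z : ℂ) : ℂ :=
  ∑ j ∈ t, ∑ k ∈ s, v j * (r j : ℂ) ^ (-z) * K j k * ((c k : ℂ) ^ z * a k)

lemma differentiable_twistedBilin (hr : ∀ j, 0 < r j) (hc : ∀ k, 0 < c k) :
    Differentiable ℂ (twistedBilin t s K v a r c) := by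
  have hr' : ∀ j, (r j : ℂ) ≠ 0 := fun j => ofReal_ne_zero.mpr (hr j).ne'
  have hc' : ∀ k, (c k : ℂ) ≠ 0 := fun k => ofReal_ne_zero.mpr (hc k).ne'
  unfold twistedBilin
  fun_prop (disch := simp [hr', hc'])

lemma bddAbove_twistedBilin (hr : ∀ j, 0 < r j) (hc : ∀ k, 0 < c k) :
    BddAbove ((norm ∘ twistedBilin t s K v a r c) '' verticalClosedStrip 0 1) := by
  refine ⟨∑ j ∈ t, ∑ k ∈ s,
    |v j| * max (r j) (r j)⁻¹ * |K j k| * (max (c k) (c k)⁻¹ * |a k|), ?_⟩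
  rintro _ ⟨z, hz, rfl⟩
  have hz : z.re ∈ Set.Icc 0 1 := hz
  have hzI : z.re ∈ Set.Icc (-1) 1 := ⟨by linarith [hz.1], hz.2⟩
  have hnzI : (-z).re ∈ Set.Icc (-1) 1 := by
    rw [neg_re]; exact ⟨by linarith [hz.2], by linarith [hz.1]⟩
  refine (norm_sum_le _ _).trans <| Finset.sum_le_sum fun j _ =>
    (norm_sum_le _ _).trans <| Finset.sum_le_sum fun k _ => ?_
  simp only [norm_mul, norm_real, Real.norm_eq_abs]
  have hrj : 0 ≤ max (r j) (r j)⁻¹ := le_max_of_le_left (hr j).le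
  gcongr
  · exact norm_ofReal_cpow_le_max (hr j) hnzI
  · exact norm_ofReal_cpow_le_max (hc k) hzI

lemma twistedBilin_eq_sub_one (hr : ∀ j, 0 < r j) (hc : ∀ k, 0 < c k) (z : ℂ) :
    twistedBilin t s K v a r c z
      = twistedBilin t s (fun j k => K j k * c k / r j) v a r c (z - 1) := by
  refine Finset.sum_congr rfl fun j _ => Finset.sum_congr rfl fun k _ => ?_
  have hr' : (r j : ℂ) ≠ 0 := ofReal_ne_zero.mpr (hr j).ne'
  have hc' : (c k : ℂ) ≠ 0 := ofReal_ne_zero.mpr (hc k).ne'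
  rw [cpow_sub _ _ hc', neg_sub, cpow_sub _ _ hr', cpow_neg]
  simp only [cpow_one]
  push_cast
  field_simp

lemma twistedBilin_ofReal (hr : ∀ j, 0 < r j) (hc : ∀ k, 0 < c k) (θ : ℝ) :
    twistedBilin t s K v a r c θ
      = ((∑ j ∈ t, ∑ k ∈ s, v j * (r j ^ (-θ) * K j k * c k ^ θ) * a k : ℝ) : ℂ) := by
  unfold twistedBilin
  push_cast [ofReal_cpow (hr _).le, ofReal_cpow (hc _).le]
  refine Finset.sum_congr rfl fun j _ => Finset.sum_congr rfl fun k _ => ?_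
  ring

variable {t s K}

lemma IsL2Contraction.norm_twistedBilin_le (h : IsL2Contraction t s K)
    (hr : ∀ j, 0 < r j) (hc : ∀ k, 0 < c k) {z : ℂ} (hz : z.re = 0) :
    ‖twistedBilin t s K v a r c z‖ ≤ √(∑ j ∈ t, v j ^ 2) * √(∑ k ∈ s, a k ^ 2) := by
  have hz' : (-z).re = 0 := by rw [neg_re, hz, neg_zero]
  unfold twistedBilin
  simpa [norm_ofReal_cpow_of_re_eq_zero (hr _) hz', norm_ofReal_cpow_of_re_eq_zero (hc _) hz]
    using h.norm_sum_mul_le (fun j => v j * (r j : ℂ) ^ (-z)) (fun k => (c k : ℂ) ^ z * a k)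

/-- Stein interpolation: `twistedBilin` is entire and bounded on the strip `0 ≤ re z ≤ 1`, and
`h₀`, `h₁` bound it on the two edges, so the three lines theorem bounds it at `z = θ`. -/
lemma IsL2Contraction.interpolate (h₀ : IsL2Contraction t s K) (hr : ∀ j, 0 < r j)
    (hc : ∀ k, 0 < c k) (h₁ : IsL2Contraction t s fun j k => K j k * c k / r j) {θ : ℝ}
    (hθ : θ ∈ Set.Icc 0 1) :
    IsL2Contraction t s fun j k => r j ^ (-θ) * K j k * c k ^ θ := by
  refine of_abs_sum_mul_le fun v a => ?_
  have hθ' : (θ : ℂ) ∈ verticalClosedStrip 0 1 := by simpa [verticalClosedStrip] using hθ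
  have h3 := norm_le_interp_of_mem_verticalClosedStrip₀₁' _ hθ'
    (differentiable_twistedBilin t s K v a hr hc).diffContOnCl
    (bddAbove_twistedBilin t s K v a hr hc)
    (fun z hz => h₀.norm_twistedBilin_le v a hr hc hz)
    (fun z (hz : z.re = 1) => by
      rw [twistedBilin_eq_sub_one t s K v a hr hc z]
      exact h₁.norm_twistedBilin_le v a hr hc (by simp [hz]))
  rwa [twistedBilin_ofReal t s K v a hr hc, norm_real, Real.norm_eq_abs, ofReal_re,
    ← Real.rpow_add' (by positivity) (by norm_num), sub_add_cancel, Real.rpow_one] at h3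

end TwistedBilin

noncomputable def freq (k : ℕ) : ℝ := π * (k + 1)

lemma freq_pos (k : ℕ) : 0 < freq k := by unfold freq; positivity

noncomputable def cosSinCoeff (j k : ℕ) : ℝ := ∫ z in Set.Ioo (0:ℝ) 1, cosfun k z * eigfun j z

lemma hasDerivAt_eigfun (k : ℕ) (z : ℝ) : HasDerivAt (eigfun k) (freq k * cosfun k z) z := by
  refine (((hasDerivAt_id z).const_mul ((k + 1 : ℝ) * π)).sin.const_mul √2).congr_deriv ?_
  simp only [freq, cosfun, id]; ring

/-- Integration by parts: `h_k h_j` vanishes at both ends of `[0, 1]`. -/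
lemma freq_mul_cosSinCoeff_add (j k : ℕ) :
    freq k * cosSinCoeff j k + freq j * cosSinCoeff k j = 0 := by
  have hcont : ∀ i, Continuous fun z => freq i * cosfun i z := fun i => by
    unfold cosfun; fun_prop
  have hibp := intervalIntegral.integral_deriv_mul_eq_sub
    (fun z _ => hasDerivAt_eigfun k z) (fun z _ => hasDerivAt_eigfun j z)
    ((hcont k).intervalIntegrable 0 1) ((hcont j).intervalIntegrable 0 1)
  have hend : ∀ i, eigfun i 0 = 0 ∧ eigfun i 1 = 0 := fun i => by
    simpa [eigfun] using Real.sin_nat_mul_pi (i + 1)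
  have hint : ∀ i i', Integrable (fun z => freq i * (cosfun i z * eigfun i' z))
      (volume.restrict (Set.Ioo (0:ℝ) 1)) := fun i i' =>
    ((memLp_cosfun i).integrable_mul (memLp_eigfun i')).const_mul (freq i)
  rw [(hend k).1, (hend k).2, (hend j).2, mul_zero, zero_mul, sub_zero,
    intervalIntegral.integral_of_le zero_le_one, integral_Ioc_eq_integral_Ioo] at hibp
  have hform : ∀ z, freq k * cosfun k z * eigfun j z + eigfun k z * (freq j * cosfun j z)
      = freq k * (cosfun k z * eigfun j z) + freq j * (cosfun j z * eigfun k z) :=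
    fun z => by ring
  simp_rw [hform] at hibp
  rwa [integral_add (hint k j) (hint j k), integral_const_mul, integral_const_mul] at hibp

lemma isL2Contraction_cosSinCoeff (t s : Finset ℕ) : IsL2Contraction t s cosSinCoeff := by
  intro a
  have hw : MemLp (fun z => ∑ k ∈ s, a k * cosfun k z) 2 (volume.restrict (Set.Ioo (0:ℝ) 1)) :=
    memLp_finsetSum s fun k _ => (memLp_cosfun k).const_mul (a k)
  calc ∑ j ∈ t, (∑ k ∈ s, cosSinCoeff j k * a k) ^ 2
      = ∑ j ∈ t, (∫ z in Set.Ioo (0:ℝ) 1, (∑ k ∈ s, a k * cosfun k z) * eigfun j z) ^ 2 := by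
        refine Finset.sum_congr rfl fun j _ => ?_
        rw [integral_sum_mul_mul memLp_cosfun (memLp_eigfun j)]
        exact congrArg (· ^ 2) (Finset.sum_congr rfl fun k _ => mul_comm _ _)
    _ ≤ ∫ z in Set.Ioo (0:ℝ) 1, (∑ k ∈ s, a k * cosfun k z) ^ 2 :=
        sum_sq_integral_mul_le_integral_sq memLp_eigfun integral_eigfun_mul_eigfun hw t
    _ = ∑ k ∈ s, a k ^ 2 := integral_sq_sum_eq_sum_sq memLp_cosfun integral_cosfun_mul_cosfun a s

lemma isL2Contraction_cosSinCoeff_mul_freq_div (t s : Finset ℕ) :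
    IsL2Contraction t s fun j k => cosSinCoeff j k * freq k / freq j := by
  have hskew : ∀ j k, cosSinCoeff j k * freq k / freq j = -cosSinCoeff k j := fun j k => by
    rw [div_eq_iff (freq_pos j).ne']
    linarith [freq_mul_cosSinCoeff_add j k]
  intro a
  simpa only [hskew, neg_mul, Finset.sum_neg_distrib, neg_sq] using
    (isL2Contraction_cosSinCoeff s t).transpose a

lemma sum_rpow_mul_sq_integral_le {α : ℝ} (hα0 : 0 ≤ α) (hα1 : α ≤ 1 / 2) (t s : Finset ℕ)
    (a : ℕ → ℝ) :
    ∑ j ∈ t, freq j ^ (-(4 * α)) * (∫ z in Set.Ioo (0:ℝ) 1,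
        (∑ k ∈ s, freq k ^ (2 * α) * a k * cosfun k z) * eigfun j z) ^ 2
      ≤ ∑ k ∈ s, a k ^ 2 := by
  have hcontr := (isL2Contraction_cosSinCoeff t s).interpolate freq_pos freq_pos
    (isL2Contraction_cosSinCoeff_mul_freq_div t s) (θ := 2 * α) ⟨by linarith, by linarith⟩ a
  refine le_of_eq_of_le (Finset.sum_congr rfl fun j _ => ?_) hcontr
  rw [integral_sum_mul_mul memLp_cosfun (memLp_eigfun j),
    show -(4 * α) = -(2 * α) * (2 : ℕ) by ring, Real.rpow_mul_natCast (freq_pos j).le, ← mul_pow,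
    Finset.mul_sum]
  congr 1
  refine Finset.sum_congr rfl fun k _ => ?_
  rw [← cosSinCoeff]
  ring

/-- **`(-A)^{−α} ∇ (-A)^{−1/2+α}` is a contraction on `L²(0,1)` for `α ∈ [0,1/2]`.**
For every finite linear combination `x = Σ_{k<n} a_k h_{k+1}`, the classical derivative of
`(-A)^{α−1/2}x` is `y = Σ_{k<n} (π(k+1))^{2α} a_k g_{k+1}`, and
`‖(-A)^{−α} y‖_{L²} = (Σ_j (π(j+1))^{−4α} ⟨y,h_{j+1}⟩²)^{1/2} ≤ ‖x‖_{L²}`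
(the summability conjunct states that the series defining the left norm converges). -/
theorem stmt_9 (α : ℝ) (hα0 : 0 ≤ α) (hα1 : α ≤ 1 / 2) (n : ℕ) (a : ℕ → ℝ) :
    (Summable fun j : ℕ => (π * (j + 1 : ℝ)) ^ (-(4 * α)) *
        (∫ z in Set.Ioo (0:ℝ) 1,
          (∑ k ∈ Finset.range n, (π * (k + 1 : ℝ)) ^ (2 * α) * a k * cosfun k z) *
            eigfun j z) ^ 2) ∧
    Real.sqrt (∑' j : ℕ, (π * (j + 1 : ℝ)) ^ (-(4 * α)) *
        (∫ z in Set.Ioo (0:ℝ) 1,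
          (∑ k ∈ Finset.range n, (π * (k + 1 : ℝ)) ^ (2 * α) * a k * cosfun k z) *
            eigfun j z) ^ 2) ≤
      Real.sqrt (∫ z in Set.Ioo (0:ℝ) 1, (∑ k ∈ Finset.range n, a k * eigfun k z) ^ 2) := by
  have hpartial := fun m => sum_rpow_mul_sq_integral_le hα0 hα1 (Finset.range m) (Finset.range n) a
  have hsum := summable_of_sum_range_le
    (fun j => mul_nonneg (Real.rpow_nonneg (freq_pos j).le _) (sq_nonneg _)) hpartial
  refine ⟨hsum, Real.sqrt_le_sqrt ?_⟩
  rw [integral_sq_sum_eq_sum_sq memLp_eigfun integral_eigfun_mul_eigfun]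
  exact hsum.tsum_le_of_sum_range_le hpartial
end
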